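/- arXiv:1909.11580 — 2 statements merged into one kernel-verified Lean document; each statement's English description precedes it below -/
import Mathlib

section
/- (Step 1 of the Haar basis construction.) Let {ψ_ℓ}_{ℓ=1}^{|C|} be any orthonormal basis of ℓ²(C). Then the combined family {T ψ_ℓ : 1 ≤ ℓ ≤ |C|} ∪ {η_{c,k} : c ∈ C, 2 ≤ k ≤ k_c} is an orthonormal basis of ℓ²(V). -/
/-- The size `k_c` of the fiber (cluster) of `c` under the parent map `p : V → C`. -/
def fiberCard {V C : Type*} [Fintype V] [DecidableEq C] (p : V → C) (c : C) : ℕ :=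
  (Finset.univ.filter fun v => p v = c).card

/-- The lifting map `T : (C → ℝ) → (V → ℝ)`, `(Tg)(v) = g(p(v)) / √(k_{p(v)})`. -/
noncomputable def lift {V C : Type*} [Fintype V] [DecidableEq C] (p : V → C) (g : C → ℝ) :
    V → ℝ :=
  fun v => g (p v) / Real.sqrt (fiberCard p (p v))

/-- `χ_{c,j}` (1-indexed `j`): the indicator function on `V` of the `j`-th vertex
`v_{c,j} = e c (j-1)` of the fixed enumeration `e c` of the fiber of `c`. -/
def chi {V C : Type*} [Fintype V] [DecidableEq V] [DecidableEq C] (p : V → C)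
    (e : ∀ c : C, Fin (fiberCard p c) → V) (c : C) (j : ℕ) : V → ℝ :=
  fun v => if hj : j - 1 < fiberCard p c then (if v = e c ⟨j - 1, hj⟩ then 1 else 0) else 0

/-- The within-cluster Haar vector `η_{c,k}` (for `2 ≤ k ≤ k_c`):
`η_{c,k} = √((k_c-k+1)/(k_c-k+2)) · (χ_{c,k-1} - (1/(k_c-k+1)) ∑_{j=k}^{k_c} χ_{c,j})`. -/
noncomputable def eta {V C : Type*} [Fintype V] [DecidableEq V] [DecidableEq C] (p : V → C)
    (e : ∀ c : C, Fin (fiberCard p c) → V) (c : C) (k : ℕ) : V → ℝ :=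
  fun v =>
    Real.sqrt (((fiberCard p c : ℝ) - k + 1) / ((fiberCard p c : ℝ) - k + 2)) *
      (chi p e c (k - 1) v -
        (1 / ((fiberCard p c : ℝ) - k + 1)) *
          ∑ j ∈ Finset.Icc k (fiberCard p c), chi p e c j v)

/-!
`T` is an isometry: on the fiber of `c` the function `Tg` is the constant `g c / √k_c`, and
the `k_c` points of the fiber contribute `k_c · (g c)² / k_c`. In the enumeration of its fiber,
`η_{c,k}` is a Helmert vector: its entries sum to zero, and for `k < k'` the vector `η_{c,k'}`
is supported on positions where `η_{c,k}` is constant. Since a zero-sum vector is orthogonal to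
anything constant on its support, the `η` are orthogonal to each other and to every `Tg`;
their norms are a direct computation. The family is orthonormal of size
`|C| + ∑_c (k_c - 1) = |V|`, hence a basis.
-/

open Finset

theorem Finset.sum_mul_eq_zero_of_eq_on_support {ι R : Type*} [NonUnitalNonAssocSemiring R]
    {s : Finset ι} {f g : ι → R} (a : R) (hf : ∀ i ∈ s, g i ≠ 0 → f i = a)
    (hg : ∑ i ∈ s, g i = 0) : ∑ i ∈ s, f i * g i = 0 := by
  calc ∑ i ∈ s, f i * g i = ∑ i ∈ s, a * g i := by
        refine sum_congr rfl fun i hi => ?_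
        by_cases hgi : g i = 0
        · simp [hgi]
        · rw [hf i hi hgi]
    _ = 0 := by rw [← mul_sum, hg, mul_zero]

lemma linearIndependent_of_sum_mul_eq_ite {ι V : Type*} [DecidableEq ι] [Fintype V]
    (F : ι → V → ℝ) (h : ∀ i j, ∑ v, F i v * F j v = if i = j then 1 else 0) :
    LinearIndependent ℝ F := by
  have : Orthonormal ℝ fun i => WithLp.toLp 2 (F i) :=
    orthonormal_iff_ite.mpr fun i j => by simpa [PiLp.inner_apply, mul_comm] using h i j
  exact this.linearIndependent.map' (WithLp.linearEquiv 2 ℝ (V → ℝ)).toLinearMap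
    (WithLp.linearEquiv 2 ℝ (V → ℝ)).ker

/-- The coordinates of `η_{c,k}` in the enumeration `i ↦ v_{c,i+1}` of a fiber of size `n`:
a Helmert vector. -/
noncomputable def haarVector (n k i : ℕ) : ℝ :=
  √(((n : ℝ) - k + 1) / ((n : ℝ) - k + 2)) *
    ((if i = k - 2 then 1 else 0) - 1 / ((n : ℝ) - k + 1) * if k - 1 ≤ i then 1 else 0)

section HaarVector

variable {n k k' : ℕ}

lemma sum_range_ite_eq_sub_two (hk : 2 ≤ k) (hkn : k ≤ n) :
    ∑ i ∈ range n, (if i = k - 2 then (1 : ℝ) else 0) = 1 := by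
  rw [sum_ite_eq', if_pos (mem_range.mpr (by omega))]

lemma sum_range_ite_sub_one_le (hk : 2 ≤ k) (hkn : k ≤ n) :
    ∑ i ∈ range n, (if k - 1 ≤ i then (1 : ℝ) else 0) = (n : ℝ) - k + 1 := by
  rw [sum_boole, range_eq_Ico, Ico_filter_le, Nat.card_Ico, max_eq_right (Nat.zero_le _),
    Nat.cast_sub (by omega), Nat.cast_sub (by omega)]
  push_cast
  ring

lemma sum_haarVector (hk : 2 ≤ k) (hkn : k ≤ n) : ∑ i ∈ range n, haarVector n k i = 0 := by
  have hm : (n : ℝ) - k + 1 ≠ 0 := by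
    have : (k : ℝ) ≤ n := by exact_mod_cast hkn
    linarith
  simp only [haarVector, ← mul_sum, sum_sub_distrib, sum_range_ite_eq_sub_two hk hkn,
    sum_range_ite_sub_one_le hk hkn]
  field_simp
  ring

lemma sum_haarVector_mul_self (hk : 2 ≤ k) (hkn : k ≤ n) :
    ∑ i ∈ range n, haarVector n k i * haarVector n k i = 1 := by
  have hm : 0 < (n : ℝ) - k + 1 := by
    have : (k : ℝ) ≤ n := by exact_mod_cast hkn
    linarith
  have hroot := Real.mul_self_sqrt (div_nonneg hm.le (by linarith) :
    0 ≤ ((n : ℝ) - k + 1) / ((n : ℝ) - k + 2))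
  -- the two indicators in `haarVector` have disjoint supports
  have hsq : ∀ i, haarVector n k i * haarVector n k i =
      ((n : ℝ) - k + 1) / ((n : ℝ) - k + 2) * ((if i = k - 2 then 1 else 0) +
        (1 / ((n : ℝ) - k + 1)) ^ 2 * if k - 1 ≤ i then 1 else 0) := by
    intro i
    rw [haarVector, mul_mul_mul_comm, hroot]
    congr 1
    split_ifs <;> first | omega | ring
  simp only [hsq, ← mul_sum, sum_add_distrib, sum_range_ite_eq_sub_two hk hkn,
    sum_range_ite_sub_one_le hk hkn]
  have : (n : ℝ) - k + 2 ≠ 0 := by linarith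
  field_simp
  ring

lemma sum_haarVector_mul_of_lt (hk : 2 ≤ k) (hkk' : k < k') (hk'n : k' ≤ n) :
    ∑ i ∈ range n, haarVector n k i * haarVector n k' i = 0 := by
  refine sum_mul_eq_zero_of_eq_on_support
    (-(√(((n : ℝ) - k + 1) / ((n : ℝ) - k + 2)) * (1 / ((n : ℝ) - k + 1))))
    (fun i _ hi => ?_) (sum_haarVector (by omega) hk'n)
  have : k' - 2 ≤ i := by
    by_contra h
    simp [haarVector, show i ≠ k' - 2 by omega, show ¬k' - 1 ≤ i by omega] at hi
  simp [haarVector, show i ≠ k - 2 by omega, show k - 1 ≤ i by omega]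

lemma sum_haarVector_mul (hk : 2 ≤ k) (hkn : k ≤ n) (hk' : 2 ≤ k') (hk'n : k' ≤ n) :
    ∑ i ∈ range n, haarVector n k i * haarVector n k' i = if k = k' then 1 else 0 := by
  rcases lt_trichotomy k k' with hlt | rfl | hgt
  · rw [sum_haarVector_mul_of_lt hk hlt hk'n, if_neg hlt.ne]
  · rw [sum_haarVector_mul_self hk hkn, if_pos rfl]
  · simp_rw [mul_comm (haarVector n k _)]
    rw [sum_haarVector_mul_of_lt hk' hgt hkn, if_neg hgt.ne']

end HaarVector

section Fibers

variable {V C : Type*} [Fintype V] [DecidableEq C] {p : V → C}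
  {e : ∀ c : C, Fin (fiberCard p c) → V}

lemma fiberCard_pos (hp : Function.Surjective p) (c : C) : 0 < fiberCard p c :=
  card_pos.mpr ((hp c).imp fun v hv => by simp [hv])

lemma sum_fiberCard [Fintype C] : ∑ c, fiberCard p c = Fintype.card V :=
  (card_eq_sum_card_fiberwise fun v _ => mem_univ (p v)).symm

lemma filter_eq_map {c : C} (he₁ : Function.Injective (e c)) (he₂ : ∀ i, p (e c i) = c) :
    ({v | p v = c} : Finset V) = univ.map ⟨e c, he₁⟩ := by
  refine (eq_of_subset_of_card_le (fun v hv => ?_) ?_).symm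
  · obtain ⟨i, -, rfl⟩ := mem_map.mp hv
    simp [he₂]
  · rw [card_map, card_univ, Fintype.card_fin]
    rfl

lemma sum_eq_sum_fin_of_eq_zero {c : C} (he₁ : Function.Injective (e c))
    (he₂ : ∀ i, p (e c i) = c) {f : V → ℝ} (hf : ∀ v, p v ≠ c → f v = 0) :
    ∑ v, f v = ∑ i, f (e c i) := by
  rw [← sum_filter_of_ne fun v _ hv => not_not.mp (mt (hf v) hv), filter_eq_map he₁ he₂,
    sum_map]
  rfl

variable [DecidableEq V]

lemma chi_apply_of_injective {c : C} (he₁ : Function.Injective (e c)) (j : ℕ)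
    (i : Fin (fiberCard p c)) : chi p e c j (e c i) = if (i : ℕ) = j - 1 then 1 else 0 := by
  by_cases hj : j - 1 < fiberCard p c
  · simp [chi, hj, he₁.eq_iff, Fin.ext_iff]
  · simp [chi, hj, show (i : ℕ) ≠ j - 1 by omega]

lemma chi_eq_zero_of_ne (he₂ : ∀ c i, p (e c i) = c) {c : C} {v : V} (hv : p v ≠ c)
    (j : ℕ) : chi p e c j v = 0 := by
  unfold chi
  split_ifs with _ h
  exacts [absurd (h ▸ he₂ c _) hv, rfl, rfl]

lemma eta_eq_zero_of_ne (he₂ : ∀ c i, p (e c i) = c) {c : C} {v : V} (hv : p v ≠ c)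
    (k : ℕ) : eta p e c k v = 0 := by
  simp [eta, chi_eq_zero_of_ne he₂ hv]

lemma sum_eta_mul_eta_of_ne (he₂ : ∀ c i, p (e c i) = c) {c c' : C} (hc : c ≠ c')
    (k k' : ℕ) : ∑ v, eta p e c k v * eta p e c' k' v = 0 := by
  refine sum_eq_zero fun v _ => ?_
  obtain hv | hv := eq_or_ne (p v) c
  · rw [eta_eq_zero_of_ne (c := c') he₂ (hv ▸ hc), mul_zero]
  · rw [eta_eq_zero_of_ne (c := c) he₂ hv, zero_mul]

lemma eta_apply_of_injective {c : C} (he₁ : Function.Injective (e c)) {k : ℕ} (hk : 2 ≤ k)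
    (i : Fin (fiberCard p c)) : eta p e c k (e c i) = haarVector (fiberCard p c) k i := by
  have hsum : ∑ j ∈ Icc k (fiberCard p c), chi p e c j (e c i) =
      if k - 1 ≤ (i : ℕ) then 1 else 0 := by
    simp_rw [chi_apply_of_injective he₁]
    rw [sum_congr rfl fun j hj => if_congr (show (i : ℕ) = j - 1 ↔ (i : ℕ) + 1 = j by
      have := (mem_Icc.mp hj).1; omega) rfl rfl, sum_ite_eq]
    exact if_congr (by have := i.isLt; simp only [mem_Icc]; omega) rfl rfl
  rw [eta, haarVector, hsum, chi_apply_of_injective he₁]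
  exact congrArg _ (congrArg₂ _ (if_congr (by omega) rfl rfl) rfl)

end Fibers

section InnerProducts

variable {V C : Type*} [Fintype V] [DecidableEq C] {p : V → C}

lemma sum_lift_mul_lift [Fintype C] (hp : Function.Surjective p) (g g' : C → ℝ) :
    ∑ v, lift p g v * lift p g' v = ∑ c, g c * g' c := by
  rw [← sum_fiberwise univ p]
  refine sum_congr rfl fun c _ => ?_
  have hk : (fiberCard p c : ℝ) ≠ 0 := by exact_mod_cast (fiberCard_pos hp c).ne'
  have hroot := Real.mul_self_sqrt (Nat.cast_nonneg (α := ℝ) (fiberCard p c))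
  calc ∑ v with p v = c, lift p g v * lift p g' v
      = ∑ v with p v = c, g c * g' c / fiberCard p c :=
        sum_congr rfl fun v hv => by
          rw [lift, lift, (mem_filter.mp hv).2, div_mul_div_comm, hroot]
    _ = g c * g' c := by rw [sum_const, nsmul_eq_mul]; exact mul_div_cancel₀ _ hk

variable [DecidableEq V] {e : ∀ c : C, Fin (fiberCard p c) → V}

lemma sum_eta_mul_eta (he₁ : ∀ c, Function.Injective (e c)) (he₂ : ∀ c i, p (e c i) = c)
    {c : C} {k k' : ℕ} (hk : 2 ≤ k ∧ k ≤ fiberCard p c)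
    (hk' : 2 ≤ k' ∧ k' ≤ fiberCard p c) :
    ∑ v, eta p e c k v * eta p e c k' v = if k = k' then 1 else 0 := by
  rw [sum_eq_sum_fin_of_eq_zero (he₁ c) (he₂ c) fun v hv => by
    rw [eta_eq_zero_of_ne he₂ hv, zero_mul]]
  simp only [eta_apply_of_injective (he₁ c) hk.1, eta_apply_of_injective (he₁ c) hk'.1]
  rw [Fin.sum_univ_eq_sum_range (fun i => haarVector _ k i * haarVector _ k' i),
    sum_haarVector_mul hk.1 hk.2 hk'.1 hk'.2]

lemma sum_lift_mul_eta (he₁ : ∀ c, Function.Injective (e c)) (he₂ : ∀ c i, p (e c i) = c)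
    (g : C → ℝ) {c : C} {k : ℕ} (hk : 2 ≤ k ∧ k ≤ fiberCard p c) :
    ∑ v, lift p g v * eta p e c k v = 0 := by
  refine sum_mul_eq_zero_of_eq_on_support (g c / √(fiberCard p c))
    (fun v _ hv => ?_) ?_
  · rw [lift, not_not.mp (mt (eta_eq_zero_of_ne he₂ · k) hv)]
  · rw [sum_eq_sum_fin_of_eq_zero (he₁ c) (he₂ c) fun v hv => eta_eq_zero_of_ne he₂ hv k]
    simp only [eta_apply_of_injective (he₁ c) hk.1]
    rw [Fin.sum_univ_eq_sum_range (haarVector _ k), sum_haarVector hk.1 hk.2]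

end InnerProducts

instance (n : ℕ) : Fintype {k : ℕ // 2 ≤ k ∧ k ≤ n} :=
  Fintype.subtype (Icc 2 n) fun _ => mem_Icc

lemma card_fin_sum_sigma_eq_card {V C : Type*} [Fintype V] [Fintype C] [DecidableEq C] {p : V → C}
    (hp : Function.Surjective p) :
    Fintype.card (Fin (Fintype.card C) ⊕ Σ c : C, {k : ℕ // 2 ≤ k ∧ k ≤ fiberCard p c}) =
      Fintype.card V := by
  have hcard (n : ℕ) : Fintype.card {k : ℕ // 2 ≤ k ∧ k ≤ n} = n - 1 := by
    rw [Fintype.card_of_subtype (p := fun k => 2 ≤ k ∧ k ≤ n) (Icc 2 n) fun k => mem_Icc,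
      Nat.card_Icc]
    omega
  rw [Fintype.card_sum, Fintype.card_fin, Fintype.card_sigma, ← sum_fiberCard (p := p),
    ← card_univ, card_eq_sum_ones, ← sum_add_distrib]
  exact sum_congr rfl fun c _ => by have := fiberCard_pos hp c; rw [hcard]; omega

theorem combined_family_orthonormal_basis_general {V C : Type*} [Fintype V] [Fintype C]
    [DecidableEq V] [DecidableEq C]
    (p : V → C) (hp : Function.Surjective p)
    (e : ∀ c : C, Fin (fiberCard p c) → V)
    (he₁ : ∀ c, Function.Injective (e c)) (he₂ : ∀ c i, p (e c i) = c)
    (ψ : Fin (Fintype.card C) → C → ℝ)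
    (hψ₁ : ∀ i j, ∑ c : C, ψ i c * ψ j c = if i = j then 1 else 0) :
    (∀ i j : Fin (Fintype.card C) ⊕ (Σ c : C, {k : ℕ // 2 ≤ k ∧ k ≤ fiberCard p c}),
      ∑ v : V,
          Sum.elim (fun ℓ => lift p (ψ ℓ))
              (fun x : Σ c : C, {k : ℕ // 2 ≤ k ∧ k ≤ fiberCard p c} =>
                eta p e x.1 x.2.1) i v *
            Sum.elim (fun ℓ => lift p (ψ ℓ))
              (fun x : Σ c : C, {k : ℕ // 2 ≤ k ∧ k ≤ fiberCard p c} =>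
                eta p e x.1 x.2.1) j v =
        if i = j then 1 else 0) ∧
    Submodule.span ℝ
        (Set.range (Sum.elim (fun ℓ => lift p (ψ ℓ))
          (fun x : Σ c : C, {k : ℕ // 2 ≤ k ∧ k ≤ fiberCard p c} =>
            eta p e x.1 x.2.1))) =
      (⊤ : Submodule ℝ (V → ℝ)) := by
  set F := Sum.elim (fun ℓ => lift p (ψ ℓ))
    fun x : Σ c : C, {k : ℕ // 2 ≤ k ∧ k ≤ fiberCard p c} => eta p e x.1 x.2.1
  have horth : ∀ i j, ∑ v, F i v * F j v = if i = j then 1 else 0 := by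
    rintro (ℓ | ⟨c, k, hk⟩) (ℓ' | ⟨c', k', hk'⟩)
    · simp [F, sum_lift_mul_lift hp, hψ₁]
    · simp [F, sum_lift_mul_eta he₁ he₂ _ hk']
    · simp [F, mul_comm (eta p e c k _), sum_lift_mul_eta he₁ he₂ _ hk]
    · obtain rfl | hc := eq_or_ne c c'
      · simp [F, sum_eta_mul_eta he₁ he₂ hk hk']
      · simp [F, hc, sum_eta_mul_eta_of_ne he₂ hc]
  refine ⟨horth,
    (linearIndependent_of_sum_mul_eq_ite F horth).span_eq_top_of_card_eq_finrank' ?_⟩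
  rw [Module.finrank_fintype_fun_eq_card, card_fin_sum_sigma_eq_card hp]

/-- Step 1 of the Haar basis construction: if `{ψ_ℓ}` is an orthonormal basis of `ℓ²(C)`,
then the combined family `{Tψ_ℓ} ∪ {η_{c,k} : c ∈ C, 2 ≤ k ≤ k_c}` is an orthonormal basis
of `ℓ²(V)` (it is orthonormal and spans all of `V → ℝ`). -/
theorem combined_family_orthonormal_basis {V C : Type*} [Fintype V] [Fintype C]
    [Nonempty V] [Nonempty C] [DecidableEq V] [DecidableEq C]
    (p : V → C) (hp : Function.Surjective p)
    (e : ∀ c : C, Fin (fiberCard p c) → V)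
    (he₁ : ∀ c, Function.Injective (e c)) (he₂ : ∀ c i, p (e c i) = c)
    (ψ : Fin (Fintype.card C) → C → ℝ)
    (hψ₁ : ∀ i j, ∑ c : C, ψ i c * ψ j c = if i = j then 1 else 0)
    (hψ₂ : Submodule.span ℝ (Set.range ψ) = (⊤ : Submodule ℝ (C → ℝ))) :
    (∀ i j : Fin (Fintype.card C) ⊕ (Σ c : C, {k : ℕ // 2 ≤ k ∧ k ≤ fiberCard p c}),
      ∑ v : V,
          Sum.elim (fun ℓ => lift p (ψ ℓ))
              (fun x : Σ c : C, {k : ℕ // 2 ≤ k ∧ k ≤ fiberCard p c} =>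
                eta p e x.1 x.2.1) i v *
            Sum.elim (fun ℓ => lift p (ψ ℓ))
              (fun x : Σ c : C, {k : ℕ // 2 ≤ k ∧ k ≤ fiberCard p c} =>
                eta p e x.1 x.2.1) j v =
        if i = j then 1 else 0) ∧
    Submodule.span ℝ
        (Set.range (Sum.elim (fun ℓ => lift p (ψ ℓ))
          (fun x : Σ c : C, {k : ℕ // 2 ≤ k ∧ k ≤ fiberCard p c} =>
            eta p e x.1 x.2.1))) =
      (⊤ : Submodule ℝ (V → ℝ)) :=
  combined_family_orthonormal_basis_general p hp e he₁ he₂ ψ hψ₁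
end

section
/- (Zero loss of HaarPooling on cluster-constant signals.) Let {ψ_ℓ}_{ℓ=1}^{|C|} be any orthonormal basis of ℓ²(C), and suppose f : V → ℝ is constant on each fiber of p (f(u) = f(v) whenever p(u) = p(v)). Then all high-frequency Haar coefficients vanish, ⟨f, η_{c,k}⟩ = 0 for all c ∈ C and 2 ≤ k ≤ k_c, and the compressive Haar transform preserves the norm: ∑_{ℓ=1}^{|C|} ⟨f, Tψ_ℓ⟩² = ∑_{v ∈ V} f(v)². -/
/-! On a fiber `f` is constant, so it pairs with every `χ_{c,j}` to the same number, while the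
coefficients of `η_{c,k}` sum to `0`. For the norm, `⟨f, Tψ⟩ = ⟨T*f, ψ⟩` with
`(T*f)(c) = (∑_{p v = c} f v) / √k_c`. An orthonormal family of `|C|` vectors is a basis of `ℓ²(C)`,
so Parseval gives `∑ ⟨f, Tψ_ℓ⟩² = ‖T*f‖²`, and `‖T*f‖ = ‖f‖` is the equality case of Cauchy–Schwarz
on each fiber. -/

open Finset

theorem sq_sum_div_card_eq_sum_sq {ι : Type*} (s : Finset ι) (f : ι → ℝ)
    (hf : ∀ i ∈ s, ∀ j ∈ s, f i = f j) : (∑ i ∈ s, f i) ^ 2 / #s = ∑ i ∈ s, f i ^ 2 := by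
  rcases s.eq_empty_or_nonempty with rfl | ⟨i₀, hi₀⟩
  · simp
  have hconst : ∀ i ∈ s, f i = f i₀ := fun i hi => hf i hi i₀ hi₀
  have hsum : ∑ i ∈ s, f i = #s * f i₀ := by rw [sum_congr rfl hconst, sum_const, nsmul_eq_mul]
  have hsum_sq : ∑ i ∈ s, f i ^ 2 = #s * f i₀ ^ 2 := by
    rw [sum_congr rfl fun i hi => by rw [hconst i hi], sum_const, nsmul_eq_mul]
  have : (#s : ℝ) ≠ 0 := by exact_mod_cast (card_pos.mpr ⟨i₀, hi₀⟩).ne'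
  rw [hsum, hsum_sq]
  field_simp

theorem sum_sq_sum_mul_eq_sum_sq_of_orthonormal {ι κ : Type*} [Fintype ι] [Fintype κ]
    [DecidableEq κ] (ψ : κ → ι → ℝ)
    (hψ : ∀ i j, ∑ c, ψ i c * ψ j c = if i = j then 1 else 0)
    (hcard : Fintype.card κ = Fintype.card ι) (F : ι → ℝ) :
    ∑ ℓ, (∑ c, F c * ψ ℓ c) ^ 2 = ∑ c, F c ^ 2 := by
  let b : κ → EuclideanSpace ℝ ι := fun ℓ => WithLp.toLp 2 (ψ ℓ)
  have hb : Orthonormal ℝ b := by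
    rw [orthonormal_iff_ite]
    intro i j
    simp only [b, EuclideanSpace.inner_toLp_toLp, dotProduct, star_trivial, ← hψ i j, mul_comm]
  have hspan : Submodule.span ℝ (Set.range b) = ⊤ :=
    hb.linearIndependent.span_eq_top_of_card_eq_finrank' (by simp [hcard])
  simpa [b, EuclideanSpace.real_norm_sq_eq, EuclideanSpace.inner_toLp_toLp, dotProduct, mul_comm]
    using (OrthonormalBasis.mk hb hspan.ge).sum_sq_inner_left (WithLp.toLp 2 F)

section Lift

variable {V C : Type*} [Fintype V] [Fintype C] [DecidableEq C] (p : V → C)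

noncomputable def liftAdjoint (f : V → ℝ) (c : C) : ℝ :=
  (∑ v with p v = c, f v) / √(fiberCard p c)

theorem sum_mul_lift (f : V → ℝ) (g : C → ℝ) :
    ∑ v, f v * lift p g v = ∑ c, liftAdjoint p f c * g c := by
  rw [← sum_fiberwise univ p]
  refine sum_congr rfl fun c _ => ?_
  rw [liftAdjoint, div_mul_eq_mul_div, sum_mul, sum_div]
  refine sum_congr rfl fun v hv => ?_
  rw [lift, (mem_filter.mp hv).2, mul_div_assoc]

theorem sum_sq_liftAdjoint {f : V → ℝ} (hf : ∀ u v, p u = p v → f u = f v) :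
    ∑ c, liftAdjoint p f c ^ 2 = ∑ v, f v ^ 2 := by
  rw [← sum_fiberwise univ p]
  refine sum_congr rfl fun c _ => ?_
  rw [liftAdjoint, div_pow, Real.sq_sqrt (Nat.cast_nonneg _), fiberCard]
  refine sq_sum_div_card_eq_sum_sq _ _ fun u hu v hv => hf u v ?_
  rw [(mem_filter.mp hu).2, (mem_filter.mp hv).2]

end Lift

section Haar

variable {V C : Type*} [Fintype V] [DecidableEq V] [DecidableEq C] (p : V → C)
  (e : ∀ c : C, Fin (fiberCard p c) → V) (f : V → ℝ) (c : C)

theorem sum_mul_chi {j : ℕ} (hj : j - 1 < fiberCard p c) :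
    ∑ v, f v * chi p e c j v = f (e c ⟨j - 1, hj⟩) := by
  simp [chi, hj]

theorem sum_mul_eta (k : ℕ) :
    ∑ v, f v * eta p e c k v =
      √(((fiberCard p c : ℝ) - k + 1) / ((fiberCard p c : ℝ) - k + 2)) *
        (∑ v, f v * chi p e c (k - 1) v - (1 / ((fiberCard p c : ℝ) - k + 1)) *
          ∑ j ∈ Icc k (fiberCard p c), ∑ v, f v * chi p e c j v) := by
  simp only [eta, mul_sum, sum_sub_distrib, mul_sub]
  rw [sum_comm (s := univ)]
  congr 1
  · exact sum_congr rfl fun _ _ => by ring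
  · exact sum_congr rfl fun _ _ => sum_congr rfl fun _ _ => by ring

theorem sum_mul_eta_eq_zero (hf : ∀ i i', f (e c i) = f (e c i')) {k : ℕ} (hk : 2 ≤ k)
    (hkc : k ≤ fiberCard p c) : ∑ v, f v * eta p e c k v = 0 := by
  have hchi : ∀ j ∈ Icc (k - 1) (fiberCard p c),
      ∑ v, f v * chi p e c j v = f (e c ⟨k - 2, by omega⟩) := fun j hj => by
    rw [mem_Icc] at hj
    rw [sum_mul_chi p e f c (by omega), hf]
  have hd : ((fiberCard p c : ℝ) - k + 1) ≠ 0 := by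
    have : (k : ℝ) ≤ fiberCard p c := by exact_mod_cast hkc
    linarith
  rw [sum_mul_eta, hchi _ (mem_Icc.mpr ⟨le_rfl, by omega⟩),
    sum_congr rfl fun j hj => hchi j (Icc_subset_Icc_left (by omega) hj), sum_const,
    Nat.card_Icc, nsmul_eq_mul, Nat.cast_sub (by omega)]
  field_simp
  push_cast
  ring

end Haar

theorem haar_pooling_zero_loss_general {V C : Type*} [Fintype V] [Fintype C]
    [DecidableEq V] [DecidableEq C]
    (p : V → C)
    (e : ∀ c : C, Fin (fiberCard p c) → V)
    (he₂ : ∀ c i, p (e c i) = c)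
    (ψ : Fin (Fintype.card C) → C → ℝ)
    (hψ₁ : ∀ i j, ∑ c : C, ψ i c * ψ j c = if i = j then 1 else 0)
    (f : V → ℝ) (hf : ∀ u v : V, p u = p v → f u = f v) :
    (∀ c : C, ∀ k : ℕ, 2 ≤ k → k ≤ fiberCard p c → ∑ v : V, f v * eta p e c k v = 0) ∧
    ∑ ℓ : Fin (Fintype.card C), (∑ v : V, f v * lift p (ψ ℓ) v) ^ 2 =
      ∑ v : V, f v ^ 2 := by
  refine ⟨fun c k hk hkc => sum_mul_eta_eq_zero p e f c
    (fun i i' => hf _ _ (by rw [he₂, he₂])) hk hkc, ?_⟩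
  simp_rw [sum_mul_lift]
  rw [sum_sq_sum_mul_eq_sum_sq_of_orthonormal ψ hψ₁ (Fintype.card_fin _), sum_sq_liftAdjoint p hf]

/-- Zero loss of HaarPooling on cluster-constant signals: if `f` is constant on each fiber
of `p`, then all high-frequency Haar coefficients `⟨f, η_{c,k}⟩` vanish, and the
compressive Haar transform preserves the norm of `f`. -/
theorem haar_pooling_zero_loss {V C : Type*} [Fintype V] [Fintype C]
    [Nonempty V] [Nonempty C] [DecidableEq V] [DecidableEq C]
    (p : V → C) (hp : Function.Surjective p)
    (e : ∀ c : C, Fin (fiberCard p c) → V)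
    (he₁ : ∀ c, Function.Injective (e c)) (he₂ : ∀ c i, p (e c i) = c)
    (ψ : Fin (Fintype.card C) → C → ℝ)
    (hψ₁ : ∀ i j, ∑ c : C, ψ i c * ψ j c = if i = j then 1 else 0)
    (hψ₂ : Submodule.span ℝ (Set.range ψ) = (⊤ : Submodule ℝ (C → ℝ)))
    (f : V → ℝ) (hf : ∀ u v : V, p u = p v → f u = f v) :
    (∀ c : C, ∀ k : ℕ, 2 ≤ k → k ≤ fiberCard p c → ∑ v : V, f v * eta p e c k v = 0) ∧
    ∑ ℓ : Fin (Fintype.card C), (∑ v : V, f v * lift p (ψ ℓ) v) ^ 2 =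
      ∑ v : V, f v ^ 2 :=
  haar_pooling_zero_loss_general p e he₂ ψ hψ₁ f hf
end
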